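/- If a binary relation e on a set A satisfies the RD-diamond property, then e has Random Descent: for every t ∈ A, all maximal e-sequences from t have the same length (either all of them are infinite, or all of them are finite with the same number of steps), and in the finite case they all end in the same e-normal element. -/
import Mathlib


/-- `t` is `e`-normal: there is no `s` with `e t s`. -/
def NormalElt {A : Type*} (e : A → A → Prop) (t : A) : Prop := ∀ s, ¬ e t s

/-- A maximal `e`-sequence from `t`, encoded as a stream that stabilizes on a normal
form in the finite case: at each step either an `e`-step is performed, or the current
element is `e`-normal and the sequence stays constant. -/
def MaxSeq {A : Type*} (e : A → A → Prop) (t : A) (f : ℕ → A) : Prop :=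
  f 0 = t ∧ ∀ n, e (f n) (f (n + 1)) ∨ (NormalElt e (f n) ∧ f (n + 1) = f n)

/-- One step of a canonical maximal sequence. -/
noncomputable def nextStep {A : Type*} (e : A → A → Prop) (x : A) : A :=
  haveI := Classical.propDecidable; if h : ∃ s, e x s then h.choose else x

/-- Canonical maximal sequence starting at `u`. -/
noncomputable def chainSeq {A : Type*} (e : A → A → Prop) (u : A) : ℕ → A
  | 0 => u
  | n + 1 => nextStep e (chainSeq e u n)

lemma chainSeq_maxSeq {A : Type*} (e : A → A → Prop) (u : A) :
    MaxSeq e u (chainSeq e u) := by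
  refine ⟨rfl, fun n => ?_⟩
  by_cases h : ∃ s, e (chainSeq e u n) s
  · left
    show e _ (nextStep e _)
    unfold nextStep
    rw [dif_pos h]
    exact h.choose_spec
  · right
    refine ⟨fun s hs => h ⟨s, hs⟩, ?_⟩
    show nextStep e _ = _
    unfold nextStep
    rw [dif_neg h]

lemma maxSeq_shift {A : Type*} {e : A → A → Prop} {t : A} {f : ℕ → A}
    (hf : MaxSeq e t f) : MaxSeq e (f 1) (fun k => f (k + 1)) :=
  ⟨rfl, fun n => hf.2 (n + 1)⟩

/-- Prepend an element to a sequence. -/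
def consSeq {A : Type*} (a : A) (h : ℕ → A) : ℕ → A
  | 0 => a
  | n + 1 => h n

lemma maxSeq_cons {A : Type*} {e : A → A → Prop} {a u : A} {h : ℕ → A}
    (hstep : e a u) (hh : MaxSeq e u h) : MaxSeq e a (consSeq a h) := by
  refine ⟨rfl, fun n => ?_⟩
  cases n with
  | zero =>
    left
    show e a (h 0)
    rw [hh.1]
    exact hstep
  | succ n => exact hh.2 n

lemma maxSeq_const {A : Type*} {e : A → A → Prop} {t : A} {f : ℕ → A}
    (hf : MaxSeq e t f) (ht : NormalElt e t) : ∀ n, f n = t := by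
  intro n
  induction n with
  | zero => exact hf.1
  | succ n ih =>
    rcases hf.2 n with h | ⟨_, h⟩
    · rw [ih] at h
      exact absurd h (ht _)
    · rw [h, ih]

lemma randomDescent_key {A : Type*} (e : A → A → Prop)
    (hd : ∀ t t₁ t₂, e t t₁ → e t t₂ → t₁ = t₂ ∨ ∃ u, e t₁ u ∧ e t₂ u) :
    ∀ n : ℕ, ∀ t (f g : ℕ → A), MaxSeq e t f → MaxSeq e t g →
      NormalElt e (f n) → NormalElt e (g n) ∧ f n = g n := by
  intro n
  induction n with
  | zero =>
    intro t f g hf hg hn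
    have heq : f 0 = g 0 := hf.1.trans hg.1.symm
    exact ⟨heq ▸ hn, heq⟩
  | succ n ih =>
    intro t f g hf hg hn
    rcases hf.2 0 with hstepf | ⟨htn, _⟩
    · rcases hg.2 0 with hstepg | ⟨htn, _⟩
      · rw [hf.1] at hstepf
        rw [hg.1] at hstepg
        rcases hd t (f 1) (g 1) hstepf hstepg with heq | ⟨u, hfu, hgu⟩
        · have hg' : MaxSeq e (f 1) (fun k => g (k + 1)) := heq ▸ maxSeq_shift hg
          exact ih (f 1) (fun k => f (k + 1)) (fun k => g (k + 1))
            (maxSeq_shift hf) hg' hn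
        · obtain ⟨hnc, heqc⟩ := ih (f 1) (fun k => f (k + 1))
            (consSeq (f 1) (chainSeq e u)) (maxSeq_shift hf)
            (maxSeq_cons hfu (chainSeq_maxSeq e u)) hn
          cases n with
          | zero => exact absurd hfu (hnc u)
          | succ m =>
            have hnc' : NormalElt e (consSeq (g 1) (chainSeq e u) (m + 1)) := hnc
            obtain ⟨hng, heqg⟩ := ih (g 1) (consSeq (g 1) (chainSeq e u))
              (fun k => g (k + 1)) (maxSeq_cons hgu (chainSeq_maxSeq e u))
              (maxSeq_shift hg) hnc'
            exact ⟨hng, heqc.trans heqg⟩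
      · rw [hg.1] at htn
        rw [hf.1] at hstepf
        exact absurd hstepf (htn _)
    · rw [hf.1] at htn
      have hfc := maxSeq_const hf htn
      have hgc := maxSeq_const hg htn
      rw [hfc, hgc]
      rw [hfc] at hn
      exact ⟨hn, rfl⟩

/-- **Random Descent from the RD-diamond property.**
If `e` satisfies the RD-diamond property, then any two maximal `e`-sequences from the
same element `t` have the same length (they reach a normal form at exactly the same
indices) and, in the finite case, they end in the same `e`-normal element. -/
theorem randomDescent_of_RD_diamond {A : Type*} (e : A → A → Prop)
    (hdiamond : ∀ t t₁ t₂, e t t₁ → e t t₂ → t₁ = t₂ ∨ ∃ u, e t₁ u ∧ e t₂ u)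
    (t : A) (f g : ℕ → A) (hf : MaxSeq e t f) (hg : MaxSeq e t g) (n : ℕ) :
    (NormalElt e (f n) ↔ NormalElt e (g n)) ∧ (NormalElt e (f n) → f n = g n) := by
  refine ⟨⟨fun h => (randomDescent_key e hdiamond n t f g hf hg h).1,
    fun h => (randomDescent_key e hdiamond n t g f hg hf h).1⟩,
    fun h => (randomDescent_key e hdiamond n t f g hf hg h).2⟩
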